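/- Let Γ be a finite simplicial graph and 𝒢 = (G_v)_{v∈V} a family of nontrivial finite groups. Suppose Γ has a SIL: there are distinct non-adjacent vertices u, v and a connected component Λ of the subgraph induced on V ∖ (link(u) ∩ link(v)) containing neither u nor v. Let a ∈ Ĝ_u and b ∈ Ĝ_v be nontrivial. Then there exist automorphisms φ and ψ of Γ𝒢 such that φ(x) = a x a⁻¹ for all x ∈ Ĝ_w with w ∈ Λ and φ(x) = x for all x ∈ Ĝ_w with w ∉ Λ, and ψ(x) = b x b⁻¹ for all x ∈ Ĝ_w with w ∈ Λ and ψ(x) = x for all x ∈ Ĝ_w with w ∉ Λ; and for any such φ, ψ, the composite φ ∘ ψ has infinite order modulo inner automorphisms, i.e. (φ ∘ ψ)ⁿ is not an inner automorphism of Γ𝒢 for any n ≥ 1. -/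

import Mathlib

open scoped Pointwise

section GraphProductDefs

variable {V : Type} (Γ : SimpleGraph V) (G : V → Type) [∀ v, Group (G v)]

/-- The set of commutation relators defining the graph product of the family `G` over `Γ`. -/
def graphProductRels : Set (Monoid.CoprodI G) :=
  { x | ∃ (u v : V) (g : G u) (h : G v), Γ.Adj u v ∧
      x = Monoid.CoprodI.of g * Monoid.CoprodI.of h *
        (Monoid.CoprodI.of g)⁻¹ * (Monoid.CoprodI.of h)⁻¹ }

/-- The graph product of the family `G` over the simplicial graph `Γ`. -/
abbrev GraphProduct : Type :=
  Monoid.CoprodI G ⧸ Subgroup.normalClosure (graphProductRels Γ G)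

/-- The canonical map from a vertex group to the graph product. -/
def GraphProduct.of (v : V) : G v →* GraphProduct Γ G :=
  (QuotientGroup.mk' (Subgroup.normalClosure (graphProductRels Γ G))).comp Monoid.CoprodI.of

/-- The image `Ĝ_v` of a vertex group in the graph product. -/
def vertexSubgroup (v : V) : Subgroup (GraphProduct Γ G) :=
  (GraphProduct.of Γ G v).range

/-- The subgroup `⟨Λ⟩` generated by the vertex groups with vertices in `Λ`. -/
def spanSubgroup (Λ : Set V) : Subgroup (GraphProduct Γ G) :=
  ⨆ v ∈ Λ, vertexSubgroup Γ G v

/-- The star of a vertex: the vertex together with its neighbours. -/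
def starSet (u : V) : Set V := insert u {w | Γ.Adj u w}

/-- `Λ` is a connected component of the subgraph of `Γ` induced on `S`: it is a nonempty
connected subset of `S` closed under adjacency within `S`. -/
def IsConnCompOf (S Λ : Set V) : Prop :=
  Λ.Nonempty ∧ Λ ⊆ S ∧ (Γ.induce Λ).Connected ∧
    ∀ a ∈ Λ, ∀ b ∈ S, Γ.Adj a b → b ∈ Λ

/-- A local automorphism: permutes the vertex subgroups according to a graph automorphism. -/
def IsLocalAut (φ : MulAut (GraphProduct Γ G)) : Prop :=
  ∃ σ : Γ ≃g Γ, ∀ v : V,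
    Subgroup.map φ.toMonoidHom (vertexSubgroup Γ G v) = vertexSubgroup Γ G (σ v)

/-- A partial conjugation: conjugates the vertex groups of a connected component `Λ` of the
graph induced on the complement of the star of `u` by an element `h ∈ Ĝ_u`, and fixes the
other vertex groups pointwise. -/
def IsPartialConj (φ : MulAut (GraphProduct Γ G)) : Prop :=
  ∃ (u : V) (Λ : Set V) (h : GraphProduct Γ G),
    h ∈ vertexSubgroup Γ G u ∧
    IsConnCompOf Γ {w | w ∉ starSet Γ u} Λ ∧
    (∀ w ∈ Λ, ∀ x ∈ vertexSubgroup Γ G w, φ x = h * x * h⁻¹) ∧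
    (∀ w, w ∉ Λ → ∀ x ∈ vertexSubgroup Γ G w, φ x = x)

/-- The subgroup of `Aut(Γ𝒢)` generated by local automorphisms and partial conjugations. -/
def ConjP : Subgroup (MulAut (GraphProduct Γ G)) :=
  Subgroup.closure {φ | IsLocalAut Γ G φ ∨ IsPartialConj Γ G φ}

/-- A conjugating automorphism: sends each vertex subgroup to a conjugate of a vertex
subgroup. -/
def IsConjugating (φ : MulAut (GraphProduct Γ G)) : Prop :=
  ∀ v : V, ∃ (w : V) (g : GraphProduct Γ G),
    Subgroup.map φ.toMonoidHom (vertexSubgroup Γ G v) =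
      Subgroup.map (MulAut.conj g).toMonoidHom (vertexSubgroup Γ G w)

end GraphProductDefs

section Extra

variable {V : Type} (Γ : SimpleGraph V) (G : V → Type) [∀ v, Group (G v)]

/-- The Cayley graph `X(Γ,𝒢)` of the graph product with respect to the union of the
(nontrivial elements of the) vertex subgroups. -/
def cayley : SimpleGraph (GraphProduct Γ G) where
  Adj x y := x ≠ y ∧ ∃ v : V, x⁻¹ * y ∈ vertexSubgroup Γ G v
  symm := ⟨by
    rintro x y ⟨hxy, v, hv⟩
    exact ⟨hxy.symm, v, by simpa using (vertexSubgroup Γ G v).inv_mem hv⟩⟩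
  loopless := ⟨fun x h => h.1 rfl⟩

/-- A molecular graph: finite, connected, minimal degree at least 2, girth at least 5. -/
def Molecular : Prop :=
  Γ.Connected ∧ (∀ v : V, 2 ≤ (Γ.neighborSet v).ncard) ∧ 5 ≤ Γ.girth

/-- An atomic graph: molecular, and the subgraph induced on the complement of each star is
nonempty and connected. -/
def Atomic : Prop :=
  Molecular Γ ∧ ∀ u : V, {w | w ∉ starSet Γ u}.Nonempty ∧
    (Γ.induce {w | w ∉ starSet Γ u}).Connected

/-- The link of a set of vertices: the vertices adjacent to every vertex of the set. -/
def linkSet (Λ : Set V) : Set V := {w | ∀ a ∈ Λ, Γ.Adj w a}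

/-- A subgroup decomposes non-trivially as a direct product. -/
def IsNontrivDirectProduct (H : Subgroup (GraphProduct Γ G)) : Prop :=
  ∃ (A B : Type) (_ : Group A) (_ : Group B),
    Nontrivial A ∧ Nontrivial B ∧ Nonempty (H ≃* A × B)

/-- `Γ` has a SIL: two distinct non-adjacent vertices `u`, `v` such that the graph induced on
the complement of `link(u) ∩ link(v)` has a connected component containing neither `u` nor
`v`. -/
def HasSIL : Prop :=
  ∃ u v : V, u ≠ v ∧ ¬ Γ.Adj u v ∧
    ∃ Λ : Set V, IsConnCompOf Γ {w | ¬ (Γ.Adj u w ∧ Γ.Adj v w)} Λ ∧ u ∉ Λ ∧ v ∉ Λ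

end Extra

/-- `φ` conjugates the vertex groups of `Λ` by `c` and fixes the other vertex groups. -/
def PartConjBy {V : Type} (Γ : SimpleGraph V) (G : V → Type) [∀ v, Group (G v)]
    (Λ : Set V) (c : GraphProduct Γ G) (φ : MulAut (GraphProduct Γ G)) : Prop :=
  (∀ w ∈ Λ, ∀ x ∈ vertexSubgroup Γ G w, φ x = c * x * c⁻¹) ∧
  (∀ w, w ∉ Λ → ∀ x ∈ vertexSubgroup Γ G w, φ x = x)

/-!
The partial conjugations exist because every neighbour of `Λ` outside `Λ` lies in
`link(u) ∩ link(v)`, so its vertex group commutes with `a` and `b`.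

Write `σ = φ ∘ ψ`. Since `a` and `b` live outside `Λ`, `σ` fixes them and conjugates every vertex
group of `Λ` by `b a`; hence `σⁿ` is the partial conjugation by `(b a)ⁿ`. If `σⁿ` were conjugation
by `g`, then `g` would commute with `a` and `b`, while `(b a)⁻ⁿ g` would commute with `Ĝ_w` for a
vertex `w ∈ Λ`, which (up to swapping `u` and `v`) we may take non-adjacent to `u`. Killing all
vertex groups except `Ĝ_u`, `Ĝ_v`, `Ĝ_w` retracts `Γ𝒢` onto the free product
`G_u * (G_v × G_w)`. There the image of `g` commutes with letters of both factors, so it is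
trivial, and then `(b a)ⁿ` would commute with a nontrivial letter, which reduced words rule out.
-/

open Monoid

namespace Monoid.CoprodI

theorem Word.prod_injective {ι : Type*} {M : ι → Type*} [∀ i, Monoid (M i)] :
    Function.Injective (Word.prod : Word M → CoprodI M) := by
  classical
  exact Word.equiv.symm.injective

variable {ι : Type*} {G : ι → Type*} [∀ i, Group (G i)]

namespace NeWord

/-- Conjugating `of c` by `w.prod` gives the reduced word `w c w⁻¹`, which is longer than `c`. -/
theorem not_commute_of_last_ne {i j k : ι} (w : NeWord G i j) {c : G k} (hc : c ≠ 1)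
    (hjk : j ≠ k) : ¬Commute (of c) w.prod := by
  intro h
  let W := (w.append hjk (singleton c hc)).append hjk.symm w.inv
  have hW : W.toWord = (singleton c hc).toWord := Word.prod_injective <| by
    change W.prod = (singleton c hc).prod
    simp [W, ← h.eq]
  have hlen := congrArg (fun w => w.toList.length) hW
  have hw := List.length_pos_of_ne_nil w.toList_ne_nil
  simp [W, toWord] at hlen
  omega

theorem not_commute_of_head_ne_last {i j k : ι} (w : NeWord G i j) (hij : i ≠ j) {c : G k}
    (hc : c ≠ 1) : ¬Commute (of c) w.prod := by
  by_cases hjk : j = k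
  · subst hjk
    rw [← Commute.inv_right_iff, ← inv_prod]
    exact w.inv.not_commute_of_last_ne hc hij
  · exact w.not_commute_of_last_ne hc hjk

theorem exists_prod_eq_pow_succ {i j : ι} (w : NeWord G i j) (hij : i ≠ j) (n : ℕ) :
    ∃ w' : NeWord G i j, w'.prod = w.prod ^ (n + 1) := by
  induction n with
  | zero => exact ⟨w, (pow_one _).symm⟩
  | succ n ih =>
    obtain ⟨w', hw'⟩ := ih
    exact ⟨w.append hij.symm w', by rw [append_prod, hw', pow_succ' _ (n + 1)]⟩

end NeWord

theorem eq_one_of_commute_of_commute {i j : ι} (hij : i ≠ j) {a : G i} {b : G j} (ha : a ≠ 1)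
    (hb : b ≠ 1) {g : CoprodI G} (hga : Commute (of a) g) (hgb : Commute (of b) g) : g = 1 := by
  classical
  by_contra hg
  obtain ⟨k, l, w, hw⟩ := NeWord.of_word (Word.equiv g) fun h => hg <| by
    rw [← Word.equiv.symm_apply_apply g, h]
    rfl
  obtain rfl : w.prod = g := by rw [NeWord.prod, hw]; exact Word.equiv.symm_apply_apply g
  by_cases hl : l = i
  · exact w.not_commute_of_last_ne hb (hl ▸ hij) hgb
  · exact w.not_commute_of_last_ne ha hl hga

theorem not_commute_pow_of_mul_of {i j k : ι} (hij : i ≠ j) {a : G i} {b : G j} {x : G k}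
    (ha : a ≠ 1) (hb : b ≠ 1) (hx : x ≠ 1) {n : ℕ} (hn : n ≠ 0) :
    ¬Commute (of x) ((of a * of b) ^ n) := by
  obtain ⟨m, rfl⟩ := Nat.exists_eq_succ_of_ne_zero hn
  obtain ⟨w, hw⟩ :=
    ((NeWord.singleton a ha).append hij (NeWord.singleton b hb)).exists_prod_eq_pow_succ hij m
  simp only [NeWord.append_prod, NeWord.prod_singleton] at hw
  rw [← hw]
  exact w.not_commute_of_head_ne_last hij hx

end Monoid.CoprodI

theorem MulAut.pow_mul_swap_eq_conj {H : Type*} [Group H] {φ ψ : MulAut H} {g : H} {n : ℕ}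
    (h : (φ * ψ) ^ n = MulAut.conj g) : (ψ * φ) ^ n = MulAut.conj (ψ g) := by
  have hsemi : SemiconjBy ψ ((φ * ψ) ^ n) ((ψ * φ) ^ n) :=
    SemiconjBy.pow_right (mul_assoc ψ φ ψ).symm n
  rw [← mul_inv_eq_iff_eq_mul.2 hsemi.eq, h]
  ext x
  simp

section PartConjBy

variable {V : Type} {Γ : SimpleGraph V} {G : V → Type} [∀ v, Group (G v)] {Λ : Set V}
  {φ ψ : MulAut (GraphProduct Γ G)} {a b c g : GraphProduct Γ G}

theorem PartConjBy.mul (hφ : PartConjBy Γ G Λ a φ) (hψ : PartConjBy Γ G Λ b ψ) (hb : φ b = b) :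
    PartConjBy Γ G Λ (b * a) (φ * ψ) := by
  refine ⟨fun w hw x hx => ?_, fun w hw x hx => ?_⟩
  · rw [MulAut.mul_apply, hψ.1 w hw x hx, map_mul, map_mul, map_inv, hb, hφ.1 w hw x hx]
    group
  · rw [MulAut.mul_apply, hψ.2 w hw x hx, hφ.2 w hw x hx]

theorem PartConjBy.pow (h : PartConjBy Γ G Λ c φ) (hc : φ c = c) (n : ℕ) :
    PartConjBy Γ G Λ (c ^ n) (φ ^ n) := by
  induction n with
  | zero => exact ⟨fun _ _ x _ => by simp, fun _ _ x _ => rfl⟩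
  | succ n ih =>
    rw [pow_succ, pow_succ']
    exact h.mul ih (by rw [map_pow, hc])

theorem PartConjBy.commute_of_conj (h : PartConjBy Γ G Λ c (MulAut.conj g)) :
    (∀ w ∉ Λ, ∀ x ∈ vertexSubgroup Γ G w, Commute g x) ∧
      ∀ w ∈ Λ, ∀ x ∈ vertexSubgroup Γ G w, Commute (c⁻¹ * g) x := by
  refine ⟨fun w hw x hx => ?_, fun w hw x hx => ?_⟩
  · exact mul_inv_eq_iff_eq_mul.1 (h.2 w hw x hx)
  · have := h.1 w hw x hx
    rw [MulAut.conj_apply] at this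
    calc c⁻¹ * g * x = c⁻¹ * (g * x * g⁻¹) * g := by group
      _ = x * (c⁻¹ * g) := by rw [this]; group

end PartConjBy

namespace GraphProduct

variable {V : Type} {Γ : SimpleGraph V} {G : V → Type} [∀ v, Group (G v)]

theorem commute_of_adj {p q : V} (h : Γ.Adj p q) (g : G p) (x : G q) :
    Commute (of Γ G p g) (of Γ G q x) := by
  rw [← commutatorElement_eq_one_iff_commute, commutatorElement_def]
  exact (QuotientGroup.eq_one_iff _).2 (Subgroup.subset_normalClosure ⟨p, q, g, x, h, rfl⟩)

def lift {T : Type*} [Group T] (f : ∀ v, G v →* T)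
    (hf : ∀ p q, Γ.Adj p q → ∀ (g : G p) (x : G q), Commute (f p g) (f q x)) :
    GraphProduct Γ G →* T :=
  QuotientGroup.lift _ (CoprodI.lift f) <| Subgroup.normalClosure_le_normal <| by
    rintro _ ⟨p, q, g, x, hpq, rfl⟩
    simpa [commutatorElement_def] using commutatorElement_eq_one_iff_commute.2 (hf p q hpq g x)

@[simp]
theorem lift_of {T : Type*} [Group T] (f : ∀ v, G v →* T) (hf) (v : V) (g : G v) :
    lift f hf (of Γ G v g) = f v g := by
  simp [lift, of]

theorem hom_ext {T : Type*} [Group T] {f f' : GraphProduct Γ G →* T}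
    (h : ∀ v (x : G v), f (of Γ G v x) = f' (of Γ G v x)) : f = f' :=
  QuotientGroup.monoidHom_ext _ (CoprodI.ext_hom _ _ fun v => MonoidHom.ext (h v))

section Retraction

variable [DecidableEq V] {ι : Type*}

/-- The vertices coloured `some i` are sent into the `i`-th factor, the others are killed. -/
noncomputable def retraction (c : V → Option ι)
    (hc : ∀ p q i j, Γ.Adj p q → c p = some i → c q = some j → i = j) :
    GraphProduct Γ G →* CoprodI (fun _ : ι => ∀ y, G y) :=
  lift (fun p => (c p).elim 1 fun i => (CoprodI.of (i := i)).comp (MonoidHom.mulSingle G p)) <| by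
    intro p q hpq g x
    cases hp : c p with
    | none => exact Commute.one_left _
    | some i =>
      cases hq : c q with
      | none => exact Commute.one_right _
      | some j =>
        obtain rfl := hc p q i j hpq hp hq
        exact (Pi.mulSingle_commute hpq.ne g x).map (CoprodI.of (M := fun _ : ι => ∀ y, G y))

theorem retraction_of_eq_some {c : V → Option ι} (hc) {p : V} {i : ι} (hp : c p = some i)
    (x : G p) : retraction c hc (of Γ G p x) = CoprodI.of (i := i) (Pi.mulSingle p x) := by
  simp [retraction, hp]

theorem exists_retraction_of_not_adj {p q w : V} (hpq : p ≠ q) (hpw : p ≠ w) (hq : ¬Γ.Adj p q)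
    (hw : ¬Γ.Adj p w) :
    ∃ ρ : GraphProduct Γ G →* CoprodI (fun _ : Bool => ∀ y, G y),
      (∀ x, ρ (of Γ G p x) = CoprodI.of (i := false) (Pi.mulSingle p x)) ∧
      (∀ x, ρ (of Γ G q x) = CoprodI.of (i := true) (Pi.mulSingle q x)) ∧
      (∀ x, ρ (of Γ G w x) = CoprodI.of (i := true) (Pi.mulSingle w x)) := by
  classical
  let c : V → Option Bool := fun y => if y = p then some false
    else if y = q ∨ y = w then some true else none
  have hc : ∀ y y' i j, Γ.Adj y y' → c y = some i → c y' = some j → i = j := by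
    intro y y' i j hyy' hy hy'
    simp only [c] at hy hy'
    split_ifs at hy hy' <;> grind [SimpleGraph.Adj.symm, SimpleGraph.irrefl]
  exact ⟨retraction c hc, retraction_of_eq_some hc (p := p) (by simp [c]),
    retraction_of_eq_some hc (p := q) (by simp [c, hpq.symm]),
    retraction_of_eq_some hc (p := w) (by simp [c, hpw.symm])⟩

end Retraction

section PartialConj

variable (Λ : Set V)

open Classical in
noncomputable def partialConj (c : GraphProduct Γ G)
    (hc : ∀ w ∈ Λ, ∀ y ∉ Λ, Γ.Adj w y → ∀ x : G y, Commute c (of Γ G y x)) :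
    GraphProduct Γ G →* GraphProduct Γ G :=
  lift (fun w => if w ∈ Λ then (MulAut.conj c).toMonoidHom.comp (of Γ G w) else of Γ G w) <| by
    intro p q hpq g x
    have hgx := commute_of_adj hpq g x
    by_cases hp : p ∈ Λ <;> by_cases hq : q ∈ Λ <;>
      simp only [hp, hq, if_true, if_false, MonoidHom.comp_apply, MulEquiv.coe_toMonoidHom,
        MulAut.conj_apply]
    · exact hgx.map (MulAut.conj c).toMonoidHom
    · have hcx := hc p hp q hq hpq x
      exact (hcx.mul_left hgx).mul_left hcx.inv_left
    · have hcg := hc q hq p hp hpq.symm g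
      exact ((hcg.mul_left hgx.symm).mul_left hcg.inv_left).symm
    · exact hgx

variable {Λ}

theorem partialConj_of_mem {c : GraphProduct Γ G} {hc} {w : V} (hw : w ∈ Λ) (x : G w) :
    partialConj Λ c hc (of Γ G w x) = c * of Γ G w x * c⁻¹ := by
  simp [partialConj, hw]

theorem partialConj_of_not_mem {c : GraphProduct Γ G} {hc} {w : V} (hw : w ∉ Λ) (x : G w) :
    partialConj Λ c hc (of Γ G w x) = of Γ G w x := by
  simp [partialConj, hw]

theorem partialConj_comp_eq_id {c d : GraphProduct Γ G} {hc hd} (hdc : d * c = 1)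
    (hfix : partialConj Λ c hc d = d) :
    (partialConj Λ c hc).comp (partialConj Λ d hd) = MonoidHom.id _ := by
  refine hom_ext fun w x => ?_
  by_cases hw : w ∈ Λ
  · rw [MonoidHom.comp_apply, partialConj_of_mem hw, map_mul, map_mul, map_inv, hfix,
      partialConj_of_mem hw, MonoidHom.id_apply]
    calc _ = d * c * of Γ G w x * (d * c)⁻¹ := by group
      _ = of Γ G w x := by simp [hdc]
  · rw [MonoidHom.comp_apply, partialConj_of_not_mem hw, partialConj_of_not_mem hw,
      MonoidHom.id_apply]

theorem exists_partConjBy {u : V} (hu : u ∉ Λ)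
    (hlink : ∀ w ∈ Λ, ∀ y ∉ Λ, Γ.Adj w y → Γ.Adj u y) {c : GraphProduct Γ G}
    (hc : c ∈ vertexSubgroup Γ G u) : ∃ φ : MulAut (GraphProduct Γ G), PartConjBy Γ G Λ c φ := by
  obtain ⟨c₀, rfl⟩ := hc
  have hcomm : ∀ d : G u, ∀ w ∈ Λ, ∀ y ∉ Λ, Γ.Adj w y → ∀ x : G y,
      Commute (of Γ G u d) (of Γ G y x) :=
    fun d w hw y hy hwy x => commute_of_adj (hlink w hw y hy hwy) d x
  refine ⟨MonoidHom.toMulEquiv (partialConj Λ _ (hcomm c₀)) (partialConj Λ _ (hcomm c₀⁻¹))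
    (partialConj_comp_eq_id (by simp) (partialConj_of_not_mem hu c₀))
    (partialConj_comp_eq_id (by simp) (partialConj_of_not_mem hu c₀⁻¹)), ?_, ?_⟩
  · rintro w hw _ ⟨x, rfl⟩
    exact partialConj_of_mem (hc := hcomm c₀) hw x
  · rintro w hw _ ⟨x, rfl⟩
    exact partialConj_of_not_mem (hc := hcomm c₀) hw x

end PartialConj

theorem partConjBy_mul_pow_ne_conj {Λ : Set V} {u v w : V} [Nontrivial (G w)] (huv : u ≠ v)
    (hadj : ¬Γ.Adj u v) (hw : ¬Γ.Adj u w) (hu : u ∉ Λ) (hv : v ∉ Λ) (hwΛ : w ∈ Λ)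
    {a b : GraphProduct Γ G} (ha : a ∈ vertexSubgroup Γ G u) (ha1 : a ≠ 1)
    (hb : b ∈ vertexSubgroup Γ G v) (hb1 : b ≠ 1) {φ ψ : MulAut (GraphProduct Γ G)}
    (hφ : PartConjBy Γ G Λ a φ) (hψ : PartConjBy Γ G Λ b ψ) {n : ℕ} (hn : n ≠ 0)
    (g : GraphProduct Γ G) : (φ * ψ) ^ n ≠ MulAut.conj g := by
  classical
  intro hg
  have hfix : (φ * ψ) (b * a) = b * a := by
    simp only [MulAut.mul_apply, map_mul, hψ.2 u hu a ha, hψ.2 v hv b hb, hφ.2 u hu a ha,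
      hφ.2 v hv b hb]
  obtain ⟨hout, hin⟩ := (hg ▸ (hφ.mul hψ (hφ.2 v hv b hb)).pow hfix n).commute_of_conj
  obtain ⟨x, hx1⟩ := exists_ne (1 : G w)
  obtain ⟨ρ, hρu, hρv, hρw⟩ :=
    exists_retraction_of_not_adj (G := G) huv (ne_of_mem_of_not_mem hwΛ hu).symm hadj hw
  obtain ⟨a₀, rfl⟩ := ha
  obtain ⟨b₀, rfl⟩ := hb
  have ha₀ : Pi.mulSingle u a₀ ≠ 1 := by
    rw [Pi.mulSingle_ne_one_iff]; rintro rfl; exact ha1 (map_one _)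
  have hb₀ : Pi.mulSingle v b₀ ≠ 1 := by
    rw [Pi.mulSingle_ne_one_iff]; rintro rfl; exact hb1 (map_one _)
  have hρg : ρ g = 1 := CoprodI.eq_one_of_commute_of_commute Bool.false_ne_true ha₀ hb₀
    (hρu a₀ ▸ ((hout u hu _ ⟨a₀, rfl⟩).map ρ).symm)
    (hρv b₀ ▸ ((hout v hv _ ⟨b₀, rfl⟩).map ρ).symm)
  have hcomm := (hin w hwΛ _ ⟨x, rfl⟩).map ρ
  rw [map_mul, hρg, mul_one, map_inv, map_pow, map_mul, hρu, hρv, hρw,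
    Commute.inv_left_iff] at hcomm
  exact CoprodI.not_commute_pow_of_mul_of Bool.false_ne_true.symm hb₀ ha₀
    (Pi.mulSingle_ne_one_iff.2 hx1) hn hcomm.symm

end GraphProduct

theorem SIL_gives_infinite_order_outer_general {V : Type}
    (Γ : SimpleGraph V) (G : V → Type) [∀ v, Group (G v)] [∀ v, Nontrivial (G v)]
    (u v : V) (huv : u ≠ v) (hadj : ¬ Γ.Adj u v) (Λ : Set V)
    (hΛ : IsConnCompOf Γ {w | ¬ (Γ.Adj u w ∧ Γ.Adj v w)} Λ) (hu : u ∉ Λ) (hv : v ∉ Λ)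
    (a b : GraphProduct Γ G)
    (ha : a ∈ vertexSubgroup Γ G u) (ha1 : a ≠ 1)
    (hb : b ∈ vertexSubgroup Γ G v) (hb1 : b ≠ 1) :
    (∃ φ ψ : MulAut (GraphProduct Γ G), PartConjBy Γ G Λ a φ ∧ PartConjBy Γ G Λ b ψ) ∧
    (∀ φ ψ : MulAut (GraphProduct Γ G), PartConjBy Γ G Λ a φ → PartConjBy Γ G Λ b ψ →
      ∀ n : ℕ, 1 ≤ n → ¬ ∃ g : GraphProduct Γ G, (φ * ψ) ^ n = MulAut.conj g) := by
  have hlink : ∀ w ∈ Λ, ∀ y ∉ Λ, Γ.Adj w y → Γ.Adj u y ∧ Γ.Adj v y :=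
    fun w hw y hy hwy => not_not.1 fun hyS => hy (hΛ.2.2.2 w hw y hyS hwy)
  refine ⟨?_, ?_⟩
  · obtain ⟨φ, hφ⟩ := GraphProduct.exists_partConjBy hu (fun w hw y hy h => (hlink w hw y hy h).1) ha
    obtain ⟨ψ, hψ⟩ := GraphProduct.exists_partConjBy hv (fun w hw y hy h => (hlink w hw y hy h).2) hb
    exact ⟨φ, ψ, hφ, hψ⟩
  · rintro φ ψ hφ hψ n hn ⟨g, hg⟩
    obtain ⟨w, hwΛ⟩ := hΛ.1
    rcases not_and_or.1 (hΛ.2.1 hwΛ) with hw | hw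
    · exact GraphProduct.partConjBy_mul_pow_ne_conj huv hadj hw hu hv hwΛ ha ha1 hb hb1 hφ hψ
        (Nat.one_le_iff_ne_zero.1 hn) g hg
    · exact GraphProduct.partConjBy_mul_pow_ne_conj huv.symm (fun h => hadj h.symm) hw hv hu hwΛ
        hb hb1 ha ha1 hψ hφ (Nat.one_le_iff_ne_zero.1 hn) (ψ g) (MulAut.pow_mul_swap_eq_conj hg)

/-- **Proposition.** If `Γ` has a SIL witnessed by `u`, `v`, `Λ`, then the two associated
partial conjugations exist, and their composite has infinite order modulo inner
automorphisms. -/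
theorem SIL_gives_infinite_order_outer {V : Type} [Fintype V]
    (Γ : SimpleGraph V) (G : V → Type) [∀ v, Group (G v)] [∀ v, Nontrivial (G v)]
    [∀ v, Finite (G v)]
    (u v : V) (huv : u ≠ v) (hadj : ¬ Γ.Adj u v) (Λ : Set V)
    (hΛ : IsConnCompOf Γ {w | ¬ (Γ.Adj u w ∧ Γ.Adj v w)} Λ) (hu : u ∉ Λ) (hv : v ∉ Λ)
    (a b : GraphProduct Γ G)
    (ha : a ∈ vertexSubgroup Γ G u) (ha1 : a ≠ 1)
    (hb : b ∈ vertexSubgroup Γ G v) (hb1 : b ≠ 1) :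
    (∃ φ ψ : MulAut (GraphProduct Γ G), PartConjBy Γ G Λ a φ ∧ PartConjBy Γ G Λ b ψ) ∧
    (∀ φ ψ : MulAut (GraphProduct Γ G), PartConjBy Γ G Λ a φ → PartConjBy Γ G Λ b ψ →
      ∀ n : ℕ, 1 ≤ n → ¬ ∃ g : GraphProduct Γ G, (φ * ψ) ^ n = MulAut.conj g) :=
  SIL_gives_infinite_order_outer_general Γ G u v huv hadj Λ hΛ hu hv a b ha ha1 hb hb1
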